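/- arXiv:1702.08169 — 2 statements merged into one kernel-verified Lean document; each statement's English description precedes it below -/
import Mathlib

section
/- Let M and C be real symmetric positive definite d×d matrices with M ⪯ C ⪯ M + 2μI for some μ ≥ 0, and let λ_d(M) denote the smallest eigenvalue of M. Then the smallest eigenvalue of C^{-1/2} M C^{-1/2} is at least λ_d(M)/(λ_d(M) + 2μ). -/
/-!
Put `c = λ / (λ + 2μ)`, so that `2μc = (1 - c)λ`. From `λI ⪯ M` and `C ⪯ M + 2μI`,
`cC ⪯ cM + (1 - c)λI ⪯ M`. Conjugating by `C^{-1/2}` gives `cI ⪯ C^{-1/2} M C^{-1/2}`,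
i.e. every eigenvalue of `C^{-1/2} M C^{-1/2}` is at least `c`. The square root of the statement
coincides with `CFC.sqrt`, so both steps take place in the Loewner order `MatrixOrder`.
-/

open Matrix

open scoped ComplexOrder in
/-- The positive semidefinite square root of a positive semidefinite matrix
(the definition of `Matrix.PosSemidef.sqrt` in the older Mathlib). -/
noncomputable def Matrix.PosSemidef.sqrt {n : Type*} [Fintype n] [DecidableEq n] {𝕜 : Type*}
    [RCLike 𝕜] {A : Matrix n n 𝕜} (hA : A.PosSemidef) : Matrix n n 𝕜 :=
  hA.isHermitian.eigenvectorUnitary.1 * diagonal ((↑) ∘ (√·) ∘ hA.isHermitian.eigenvalues) *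
    (star hA.isHermitian.eigenvectorUnitary : Matrix n n 𝕜)

open scoped MatrixOrder ComplexOrder

theorem smul_div_add_le_of_smul_le {E : Type*} [AddCommGroup E] [PartialOrder E]
    [IsOrderedAddMonoid E] [Module ℝ E] [PosSMulMono ℝ E] {a b : ℝ} {e m c : E}
    (ha : 0 < a) (hb : 0 ≤ b) (hm : a • e ≤ m) (hc : c ≤ m + b • e) :
    (a / (a + b)) • c ≤ m := by
  set s := a / (a + b)
  have hs : 0 ≤ s := by positivity
  have hs1 : 0 ≤ 1 - s := by
    rw [sub_nonneg, div_le_one (by positivity)]; linarith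
  have hsb : s * b = (1 - s) * a := by
    simp only [s]; field_simp; ring
  calc s • c ≤ s • (m + b • e) := smul_le_smul_of_nonneg_left hc hs
    _ = s • m + (1 - s) • (a • e) := by rw [smul_add, smul_smul, smul_smul, hsb]
    _ ≤ s • m + (1 - s) • m := by gcongr
    _ = m := by rw [← add_smul, add_sub_cancel, one_smul]

namespace Matrix

variable {n 𝕜 : Type*} [Fintype n] [DecidableEq n] [RCLike 𝕜]

theorem PosSemidef.sqrt_eq_cfcSqrt {A : Matrix n n 𝕜} (hA : A.PosSemidef) :
    hA.sqrt = CFC.sqrt A := by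
  rw [CFC.sqrt_eq_real_sqrt A hA.nonneg, cfcₙ_eq_cfc, hA.isHermitian.cfc_eq]
  rfl

theorem PosDef.inv_sqrt_mul_mul_inv_sqrt {C : Matrix n n 𝕜} (hC : C.PosDef) :
    (CFC.sqrt C)⁻¹ * C * (CFC.sqrt C)⁻¹ = 1 := by
  have hS : IsUnit (CFC.sqrt C).det :=
    (isUnit_iff_isUnit_det _).1 (CFC.isUnit_sqrt_iff_isStrictlyPositive.2 hC.isStrictlyPositive)
  calc (CFC.sqrt C)⁻¹ * C * (CFC.sqrt C)⁻¹
      = (CFC.sqrt C)⁻¹ * (CFC.sqrt C * CFC.sqrt C) * (CFC.sqrt C)⁻¹ := by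
        rw [CFC.sqrt_mul_sqrt_self C hC.posSemidef.nonneg]
    _ = 1 := by
      rw [← Matrix.mul_assoc, nonsing_inv_mul _ hS, Matrix.one_mul, mul_nonsing_inv _ hS]

theorem PosDef.algebraMap_le_inv_sqrt_mul_mul_inv_sqrt {C M : Matrix n n 𝕜} (hC : C.PosDef)
    {c : ℝ} (h : c • C ≤ M) : algebraMap ℝ _ c ≤ (CFC.sqrt C)⁻¹ * M * (CFC.sqrt C)⁻¹ := by
  have hstar : star (CFC.sqrt C)⁻¹ = (CFC.sqrt C)⁻¹ :=
    ((CFC.sqrt_nonneg C).posSemidef.isHermitian.inv : _)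
  have := star_left_conjugate_le_conjugate h (CFC.sqrt C)⁻¹
  rwa [hstar, Matrix.mul_smul, Matrix.smul_mul, hC.inv_sqrt_mul_mul_inv_sqrt,
    ← Algebra.algebraMap_eq_smul_one] at this

end Matrix

theorem stmt7_general {d : ℕ} (M C : Matrix (Fin d) (Fin d) ℝ) (μ : ℝ) (hμ : 0 ≤ μ)
    (hM : M.PosDef) (hC : C.PosDef)
    (h2 : (M + (2 * μ) • (1 : Matrix (Fin d) (Fin d) ℝ) - C).PosSemidef)
    (lammin : ℝ) (hmem : lammin ∈ spectrum ℝ M)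
    (hmin : ∀ ν ∈ spectrum ℝ M, lammin ≤ ν) :
    ∀ t ∈ spectrum ℝ ((hC.posSemidef.sqrt)⁻¹ * M * (hC.posSemidef.sqrt)⁻¹),
      lammin / (lammin + 2 * μ) ≤ t := by
  have hlam : 0 < lammin := hM.isStrictlyPositive.spectrum_pos hmem
  have hM_ge : lammin • (1 : Matrix (Fin d) (Fin d) ℝ) ≤ M := by
    rw [← Algebra.algebraMap_eq_smul_one]
    exact (algebraMap_le_iff_le_spectrum hM.isHermitian.isSelfAdjoint).2 hmin
  have hconj := hC.algebraMap_le_inv_sqrt_mul_mul_inv_sqrt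
    (smul_div_add_le_of_smul_le hlam (by positivity) hM_ge h2)
  rw [hC.posSemidef.sqrt_eq_cfcSqrt]
  exact (algebraMap_le_iff_le_spectrum (.of_ge hconj (.algebraMap _ (.all _)))).1 hconj

/-- If `M ⪯ C ⪯ M + 2μI` with `M`, `C` positive definite and `μ ≥ 0`, then the
smallest eigenvalue of `C^{-1/2} M C^{-1/2}` is at least
`λ_min(M) / (λ_min(M) + 2μ)`. -/
theorem stmt7 {d : ℕ} (M C : Matrix (Fin d) (Fin d) ℝ) (μ : ℝ) (hμ : 0 ≤ μ)
    (hM : M.PosDef) (hC : C.PosDef)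
    (h1 : (C - M).PosSemidef)
    (h2 : (M + (2 * μ) • (1 : Matrix (Fin d) (Fin d) ℝ) - C).PosSemidef)
    (lammin : ℝ) (hmem : lammin ∈ spectrum ℝ M)
    (hmin : ∀ ν ∈ spectrum ℝ M, lammin ≤ ν) :
    ∀ t ∈ spectrum ℝ ((hC.posSemidef.sqrt)⁻¹ * M * (hC.posSemidef.sqrt)⁻¹),
      lammin / (lammin + 2 * μ) ≤ t :=
  stmt7_general M C μ hμ hM hC h2 lammin hmem hmin
end

section
/- Let X be the 2×2 diagonal matrix diag(1+δ, 1) with δ > 0 and let X̂ = [[1+δ, y],[y, z]] with |y| ≤ cδ and |1 − z| ≤ cδ for a sufficiently small universal constant c > 0 (c = 1/8 suffices). Then the unit leading eigenvector v̂ of X̂ whose first coordinate is positive satisfies |v̂₂ − y/δ| ≤ C(y² + (1−z)²)/δ² for a universal constant C. -/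
/-!
Write `v = (v₀, v₁)`. The eigenvalue `λ` of `X̂ = [[1+δ, y], [y, z]]` belonging to `v` solves
`(λ - 1 - δ)(λ - z) = y²`, and since `tr X̂ - λ` is the other eigenvalue, leadership means
`2λ ≥ 1 + δ + z`. Hence the gap `g = λ - z` is at least `7δ/16` and the excess
`λ - 1 - δ = y²/g` is `O(y²/δ)`. The second eigenvector equation gives `v₁ = y v₀ / g`, so
`v₁ - y/δ = -y ((λ - 1 - δ) + (1 - z) + δ (1 - v₀)) / (g δ)`,
and each of the three terms is of second order: the first by the excess bound, the second by
`|y| |1 - z| ≤ (y² + (1 - z)²)/2`, the third because `1 - v₀ ≤ v₁² = O(y²/δ²)`.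
-/

open Matrix

namespace Matrix

lemma mulVec_fin_two_eq_smul_iff {R : Type*} [Semiring R] {a b c d μ : R} {v : Fin 2 → R} :
    !![a, b; c, d] *ᵥ v = μ • v ↔
      a * v 0 + b * v 1 = μ * v 0 ∧ c * v 0 + d * v 1 = μ * v 1 := by
  rw [mulVec_fin_two, funext_iff, Fin.forall_fin_two]
  simp

variable {K : Type*} [Field K]

lemma mem_spectrum_of_mulVec_eq_smul {n : Type*} [Fintype n] [DecidableEq n] {A : Matrix n n K}
    {μ : K} {v : n → K} (h : A *ᵥ v = μ • v) (hv : v ≠ 0) : μ ∈ spectrum K A := by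
  rw [← spectrum_toLin', ← Module.End.hasEigenvalue_iff_mem_spectrum]
  exact Module.End.hasEigenvalue_of_hasEigenvector ⟨Module.End.mem_eigenspace_iff.mpr h, hv⟩

lemma mem_spectrum_fin_two_iff {a b c d μ : K} :
    μ ∈ spectrum K !![a, b; c, d] ↔ (μ - a) * (μ - d) = b * c := by
  rw [mem_spectrum_iff_not_isUnit_eval_charpoly, charpoly_fin_two, isUnit_iff_ne_zero, not_not]
  simp only [Polynomial.eval_add, Polynomial.eval_sub, Polynomial.eval_pow, Polynomial.eval_mul,
    Polynomial.eval_X, Polynomial.eval_C, trace_fin_two_of, det_fin_two_of]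
  constructor <;> intro h <;> linear_combination h

lemma add_sub_mem_spectrum_fin_two {a b c d μ : K} (h : μ ∈ spectrum K !![a, b; c, d]) :
    a + d - μ ∈ spectrum K !![a, b; c, d] := by
  rw [mem_spectrum_fin_two_iff] at h ⊢
  linear_combination h

end Matrix

lemma one_sub_le_sq_of_sq_add_sq_eq_one {u w : ℝ} (hu : 0 ≤ u) (h : u ^ 2 + w ^ 2 = 1) :
    1 - u ≤ w ^ 2 := by
  nlinarith

theorem abs_eigenvector_snd_sub_div_le {δ y z lam v₀ v₁ : ℝ} (hδ : 0 < δ) (hy : |y| ≤ δ / 8)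
    (hz : |1 - z| ≤ δ / 8) (hchar : (lam - (1 + δ)) * (lam - z) = y * y)
    (hlead : 1 + δ + z ≤ 2 * lam) (hv₁ : y * v₀ + z * v₁ = lam * v₁)
    (hnorm : v₀ ^ 2 + v₁ ^ 2 = 1) (hv₀ : 0 ≤ v₀) :
    |v₁ - y / δ| ≤ 4 * (y ^ 2 + (1 - z) ^ 2) / δ ^ 2 := by
  set g := lam - z
  set e := lam - (1 + δ)
  have hg : 7 * δ / 16 ≤ g := by linarith [(abs_le.mp hz).1]
  have hg₀ : 0 < g := by linarith
  have he : 0 ≤ e := nonneg_of_mul_nonneg_left (hchar ▸ mul_self_nonneg y) hg₀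
  have hgv : g * v₁ = y * v₀ := by linear_combination -hv₁
  have hv₀le : v₀ ≤ 1 := by nlinarith
  have hdefect₀ : 0 ≤ δ * (1 - v₀) := mul_nonneg hδ.le (sub_nonneg.mpr hv₀le)
  have hv₁sq : δ ^ 2 * v₁ ^ 2 ≤ 256 / 49 * y ^ 2 := by
    have : g ^ 2 * v₁ ^ 2 ≤ y ^ 2 := by
      rw [← mul_pow, hgv, mul_pow]
      nlinarith [sq_nonneg y]
    nlinarith [mul_le_mul_of_nonneg_right (pow_le_pow_left₀ (by positivity) hg 2) (sq_nonneg v₁)]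
  have key : (v₁ - y / δ) * (g * δ) = -y * (e + (1 - z) + δ * (1 - v₀)) := by
    field_simp
    linear_combination δ * hgv
  have hexcess : |y| * e ≤ 2 / 7 * y ^ 2 := by
    nlinarith [mul_le_mul_of_nonneg_right hy (mul_nonneg he hg₀.le), sq_abs y,
      mul_le_mul_of_nonneg_left hg (mul_nonneg (abs_nonneg y) he)]
  have hcross : |y| * |1 - z| ≤ (y ^ 2 + (1 - z) ^ 2) / 2 := by
    nlinarith [two_mul_le_add_sq |y| |1 - z|, sq_abs y, sq_abs (1 - z)]
  have hdefect : |y| * (δ * (1 - v₀)) ≤ 32 / 49 * y ^ 2 := by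
    have h := one_sub_le_sq_of_sq_add_sq_eq_one hv₀ hnorm
    nlinarith [mul_le_mul_of_nonneg_right hy hdefect₀, mul_le_mul_of_nonneg_left h hδ.le]
  have hbound : |v₁ - y / δ| * (g * δ) ≤ 3 / 2 * (y ^ 2 + (1 - z) ^ 2) := by
    rw [← abs_of_pos (mul_pos hg₀ hδ), ← abs_mul, key, abs_mul, abs_neg]
    calc |y| * |e + (1 - z) + δ * (1 - v₀)|
        ≤ |y| * (e + |1 - z| + δ * (1 - v₀)) := by
          gcongr
          exact abs_le.mpr ⟨by linarith [neg_abs_le (1 - z)], by linarith [le_abs_self (1 - z)]⟩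
      _ ≤ 3 / 2 * (y ^ 2 + (1 - z) ^ 2) := by nlinarith
  rw [le_div_iff₀ (by positivity)]
  nlinarith [mul_le_mul_of_nonneg_left (mul_le_mul_of_nonneg_right hg hδ.le)
    (abs_nonneg (v₁ - y / δ))]

/-- For `X̂ = [[1+δ, y],[y, z]]` with `|y| ≤ δ/8` and `|1-z| ≤ δ/8`, the unit
leading eigenvector `v` of `X̂` with positive first coordinate satisfies
`|v₂ - y/δ| ≤ C (y² + (1-z)²)/δ²` for a universal constant `C > 0`. -/
theorem stmt19 :
    ∃ C : ℝ, 0 < C ∧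
      ∀ (δ y z : ℝ), 0 < δ → |y| ≤ δ / 8 → |1 - z| ≤ δ / 8 →
        ∀ (lam : ℝ) (v : Fin 2 → ℝ),
          (∑ i, (v i) ^ 2 = 1) →
          (!![1 + δ, y; y, z] : Matrix (Fin 2) (Fin 2) ℝ).mulVec v = lam • v →
          (∀ μ ∈ spectrum ℝ (!![1 + δ, y; y, z] : Matrix (Fin 2) (Fin 2) ℝ), μ ≤ lam) →
          0 < v 0 →
          |v 1 - y / δ| ≤ C * (y ^ 2 + (1 - z) ^ 2) / δ ^ 2 := by
  refine ⟨4, by norm_num, fun δ y z hδ hy hz lam v hnorm hv hlead hv₀ => ?_⟩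
  have hspec : lam ∈ spectrum ℝ !![1 + δ, y; y, z] :=
    mem_spectrum_of_mulVec_eq_smul hv fun h => hv₀.ne' (congrFun h 0)
  have hother := hlead _ (add_sub_mem_spectrum_fin_two hspec)
  rw [Fin.sum_univ_two] at hnorm
  exact abs_eigenvector_snd_sub_div_le hδ hy hz (mem_spectrum_fin_two_iff.mp hspec)
    (by linarith) (mulVec_fin_two_eq_smul_iff.mp hv).2 hnorm hv₀.le
end
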